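/- arXiv:2603.11937 — 3 statements merged into one kernel-verified Lean document; each statement's English description precedes it below -/
import Mathlib

section
/- Let 𝔸 be a left s-unital nonunital ring and M a left module over 𝔸 such that every element of M lies in the additive subgroup of M generated by the set {a • x : a ∈ 𝔸, x ∈ M}. Then M is s-unital: for every m ∈ M there exists e ∈ 𝔸 with e • m = m. (This is the 'firm implies s-unital' direction: if the canonical map 𝔸 ⊗ M → M is surjective and 𝔸 is left s-unital, then M is s-unital.) -/
/-!
Call `a ∈ 𝔸` an anchor of `m ∈ M` if every left unit of `a` fixes `m`. A generator `a • y` is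
anchored by `a`, and if `g` is a common left unit of anchors of `m` and `m'`, then `g` anchors
`m + m'`. Hence the anchored elements form an additive subgroup containing the generators, so
every `m` has an anchor `a`, and a left unit of `a` fixes `m`.
-/

section LeftSUnital

variable {𝔸 : Type*} [NonUnitalRing 𝔸]

/-- Tominaga's trick: if `e * x = x` and `f * (y - e * y) = y - e * y`, then `e + f - f * e` is
a left unit of both `x` and `y`. -/
theorem exists_common_left_unit (hA : ∀ x : 𝔸, ∃ e : 𝔸, e * x = x) (x y : 𝔸) :
    ∃ g : 𝔸, g * x = x ∧ g * y = y := by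
  obtain ⟨e, he⟩ := hA x
  obtain ⟨f, hf⟩ := hA (y - e * y)
  refine ⟨e + f - f * e, ?_, ?_⟩
  · rw [sub_mul, add_mul, he, mul_assoc, he]
    abel
  · rw [mul_sub, ← mul_assoc] at hf
    rw [sub_mul, add_mul, add_sub_assoc, hf]
    abel

theorem mul_eq_of_mul_eq_of_mul_eq {e g x : 𝔸} (heg : e * g = g) (hgx : g * x = x) :
    e * x = x := by
  rw [← hgx, ← mul_assoc, heg]

end LeftSUnital

section Anchored

variable {𝔸 M : Type*} [NonUnitalRing 𝔸] [AddCommGroup M]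

def anchoredSubgroup (σ : 𝔸 → M →+ M) (hA : ∀ x : 𝔸, ∃ e : 𝔸, e * x = x) : AddSubgroup M where
  carrier := {m | ∃ a : 𝔸, ∀ e : 𝔸, e * a = a → σ e m = m}
  zero_mem' := ⟨0, fun e _ => map_zero (σ e)⟩
  add_mem' := by
    rintro m m' ⟨a, ha⟩ ⟨a', ha'⟩
    obtain ⟨g, hga, hga'⟩ := exists_common_left_unit hA a a'
    refine ⟨g, fun e heg => ?_⟩
    rw [map_add, ha e (mul_eq_of_mul_eq_of_mul_eq heg hga),
      ha' e (mul_eq_of_mul_eq_of_mul_eq heg hga')]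
  neg_mem' := by
    rintro m ⟨a, ha⟩
    exact ⟨a, fun e hea => by rw [map_neg, ha e hea]⟩

theorem smul_mem_anchoredSubgroup (σ : 𝔸 → M →+ M) (hA : ∀ x : 𝔸, ∃ e : 𝔸, e * x = x)
    (σ_mul : ∀ (a b : 𝔸) (m : M), σ (a * b) m = σ a (σ b m)) (a : 𝔸) (y : M) :
    σ a y ∈ anchoredSubgroup σ hA :=
  ⟨a, fun e hea => by rw [← σ_mul, hea]⟩

theorem exists_smul_eq_self_of_mem_anchoredSubgroup {σ : 𝔸 → M →+ M}
    {hA : ∀ x : 𝔸, ∃ e : 𝔸, e * x = x} {m : M} (hm : m ∈ anchoredSubgroup σ hA) :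
    ∃ e : 𝔸, σ e m = m := by
  obtain ⟨a, ha⟩ := hm
  obtain ⟨e, hea⟩ := hA a
  exact ⟨e, ha e hea⟩

end Anchored

theorem sUnital_of_generated_by_smuls_general
    (𝔸 M : Type*) [NonUnitalRing 𝔸] [AddCommGroup M]
    (σ : 𝔸 → M → M)
    (σ_madd : ∀ (a : 𝔸) (m m' : M), σ a (m + m') = σ a m + σ a m')
    (σ_mul : ∀ (a b : 𝔸) (m : M), σ (a * b) m = σ a (σ b m))
    (hA : ∀ x : 𝔸, ∃ e : 𝔸, e * x = x)
    (hgen : ∀ m : M,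
      m ∈ AddSubgroup.closure {x : M | ∃ (a : 𝔸) (y : M), x = σ a y}) :
    ∀ m : M, ∃ e : 𝔸, σ e m = m := by
  let τ : 𝔸 → M →+ M := fun a => AddMonoidHom.mk' (σ a) (σ_madd a)
  have generators_anchored :
      AddSubgroup.closure {x : M | ∃ (a : 𝔸) (y : M), x = σ a y} ≤ anchoredSubgroup τ hA :=
    (AddSubgroup.closure_le _).2 <| by
      rintro _ ⟨a, y, rfl⟩
      exact smul_mem_anchoredSubgroup τ hA σ_mul a y
  exact fun m => exists_smul_eq_self_of_mem_anchoredSubgroup (generators_anchored (hgen m))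

/-- let `𝔸` be a left s-unital nonunital ring and `M` a left
`𝔸`-module (action `σ`) such that every element of `M` lies in the additive
subgroup generated by `{σ a x : a ∈ 𝔸, x ∈ M}` (i.e. the canonical map
`𝔸 ⊗ M → M` is surjective; `M` is "firm-surjective").  Then `M` is s-unital. -/
theorem sUnital_of_generated_by_smuls
    (𝔸 M : Type*) [NonUnitalRing 𝔸] [AddCommGroup M]
    (σ : 𝔸 → M → M)
    (σ_add : ∀ (a b : 𝔸) (m : M), σ (a + b) m = σ a m + σ b m)
    (σ_madd : ∀ (a : 𝔸) (m m' : M), σ a (m + m') = σ a m + σ a m')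
    (σ_mul : ∀ (a b : 𝔸) (m : M), σ (a * b) m = σ a (σ b m))
    (hA : ∀ x : 𝔸, ∃ e : 𝔸, e * x = x)
    (hgen : ∀ m : M,
      m ∈ AddSubgroup.closure {x : M | ∃ (a : 𝔸) (y : M), x = σ a y}) :
    ∀ m : M, ∃ e : 𝔸, σ e m = m :=
  sUnital_of_generated_by_smuls_general 𝔸 M σ σ_madd σ_mul hA hgen
end

section
/- Let R be a commutative ring, 𝔸 a left s-unital nonunital R-algebra, and M an s-unital left module over 𝔸. Regard 𝔸 as a right module over itself via multiplication (x • a = x * a) with its R-action. Let (T, p) be any abelian group together with an 𝔸-balanced bi-additive map p : 𝔸 → M → T satisfying the universal property of the nonunital tensor product 𝔸 ⊗_𝔸 M (i.e. p is additive in each variable, p(x * a, m) = p(x, a • m), p(r • x, m) = p(x, r • m), and every such balanced bi-additive map into an abelian group factors uniquely additively through p). Then the unique additive homomorphism F : T →+ M satisfying F(p x m) = x • m for all x ∈ 𝔸, m ∈ M is bijective. In other words, every s-unital module over a left s-unital algebra is firm. -/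
universe u

/-- every s-unital left module over a left s-unital nonunital
`R`-algebra is firm.  Here `(T, p)` is any realization of the nonunital tensor
product `𝔸 ⊗_𝔸 M` (where `𝔸` is a right module over itself via multiplication),
given by its universal property, and `F : T →+ M` is the unique additive map with
`F (p x m) = σ x m`; the claim is that `F` is bijective. -/
theorem sUnital_module_is_firm
    (R : Type*) (𝔸 M : Type u) [CommRing R] [NonUnitalRing 𝔸] [Module R 𝔸]
    [IsScalarTower R 𝔸 𝔸] [SMulCommClass R 𝔸 𝔸]
    [AddCommGroup M] [Module R M]
    (σ : 𝔸 → M → M)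
    -- left `𝔸`-module axioms for `M`
    (σ_add : ∀ (a b : 𝔸) (m : M), σ (a + b) m = σ a m + σ b m)
    (σ_madd : ∀ (a : 𝔸) (m m' : M), σ a (m + m') = σ a m + σ a m')
    (σ_mul : ∀ (a b : 𝔸) (m : M), σ (a * b) m = σ a (σ b m))
    (σ_smul : ∀ (r : R) (a : 𝔸) (m : M), σ (r • a) m = r • σ a m)
    (σ_smul' : ∀ (r : R) (a : 𝔸) (m : M), σ a (r • m) = r • σ a m)
    -- s-unitality of `𝔸` and of `M`
    (hA : ∀ x : 𝔸, ∃ e : 𝔸, e * x = x)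
    (hM : ∀ m : M, ∃ e : 𝔸, σ e m = m)
    -- `(T, p)` realizes the nonunital tensor product `𝔸 ⊗_𝔸 M`
    (T : Type u) [AddCommGroup T] (p : 𝔸 → M → T)
    (p_add : ∀ (x x' : 𝔸) (m : M), p (x + x') m = p x m + p x' m)
    (p_madd : ∀ (x : 𝔸) (m m' : M), p x (m + m') = p x m + p x m')
    (p_bal : ∀ (x a : 𝔸) (m : M), p (x * a) m = p x (σ a m))
    (p_rbal : ∀ (r : R) (x : 𝔸) (m : M), p (r • x) m = p x (r • m))
    (p_univ : ∀ (G : Type u) (_ : AddCommGroup G) (f : 𝔸 → M → G),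
      ((∀ (x x' : 𝔸) (m : M), f (x + x') m = f x m + f x' m) ∧
       (∀ (x : 𝔸) (m m' : M), f x (m + m') = f x m + f x m') ∧
       (∀ (x a : 𝔸) (m : M), f (x * a) m = f x (σ a m)) ∧
       (∀ (r : R) (x : 𝔸) (m : M), f (r • x) m = f x (r • m))) →
      ∃! F : T →+ G, ∀ (x : 𝔸) (m : M), F (p x m) = f x m)
    -- the canonical map `F : 𝔸 ⊗_𝔸 M → M`
    (F : T →+ M) (hF : ∀ (x : 𝔸) (m : M), F (p x m) = σ x m) :
    Function.Bijective F := by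
  -- common left units
  have hA2 : ∀ x y : 𝔸, ∃ e : 𝔸, e * x = x ∧ e * y = y := by
    intro x y
    obtain ⟨e1, h1⟩ := hA x
    obtain ⟨e2, h2⟩ := hA (y - e1 * y)
    rw [mul_sub] at h2
    refine ⟨e1 + e2 - e2 * e1, ?_, ?_⟩
    · have : (e1 + e2 - e2 * e1) * x = e1 * x + (e2 * x - e2 * (e1 * x)) := by
        rw [sub_mul, add_mul, mul_assoc]; abel
      rw [this, h1]; abel
    · have : (e1 + e2 - e2 * e1) * y = e1 * y + (e2 * y - e2 * (e1 * y)) := by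
        rw [sub_mul, add_mul, mul_assoc]; abel
      rw [this, h2]; abel
  have p_zero : ∀ x : 𝔸, p x 0 = 0 := by
    intro x
    have h := p_madd x 0 0
    rw [add_zero] at h
    exact left_eq_add.mp h
  have p_neg : ∀ (x : 𝔸) (m : M), p x (-m) = -p x m := by
    intro x m
    have h := p_madd x m (-m)
    rw [add_neg_cancel, p_zero] at h
    exact (neg_eq_of_add_eq_zero_right h.symm).symm
  -- every element of T is a pure tensor
  have hS : ∀ t : T, ∃ (x : 𝔸) (m : M), t = p x m := by
    set S : AddSubgroup T :=
      { carrier := {t | ∃ (x : 𝔸) (m : M), t = p x m}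
        zero_mem' := ⟨0, 0, (p_zero 0).symm⟩
        add_mem' := by
          rintro a b ⟨x, m, rfl⟩ ⟨x', m', rfl⟩
          obtain ⟨e, he, he'⟩ := hA2 x x'
          exact ⟨e, σ x m + σ x' m', by
            rw [p_madd, ← p_bal, ← p_bal, he, he']⟩
        neg_mem' := by
          rintro a ⟨x, m, rfl⟩
          exact ⟨x, -m, (p_neg x m).symm⟩ } with hSdef
    have hmem : ∀ (x : 𝔸) (m : M), p x m ∈ S := fun x m => ⟨x, m, rfl⟩
    obtain ⟨F', hF', _⟩ := p_univ (↥S) inferInstance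
      (fun x m => (⟨p x m, hmem x m⟩ : ↥S))
      ⟨fun x x' m => Subtype.ext (p_add x x' m),
       fun x m m' => Subtype.ext (p_madd x m m'),
       fun x a m => Subtype.ext (p_bal x a m),
       fun r x m => Subtype.ext (p_rbal r x m)⟩
    obtain ⟨Fid, _, huniq⟩ := p_univ T inferInstance p
      ⟨p_add, p_madd, p_bal, p_rbal⟩
    have h1 : S.subtype.comp F' = AddMonoidHom.id T := by
      rw [huniq (S.subtype.comp F') (fun x m => by simp [hF' x m]),
        huniq (AddMonoidHom.id T) (fun x m => rfl)]
    intro t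
    have ht : (F' t : T) = t := by
      have := congrArg (fun φ => φ t) h1
      simpa using this
    obtain ⟨x, m, hx⟩ := (F' t).2
    exact ⟨x, m, by rw [← ht, hx]⟩
  constructor
  · rw [injective_iff_map_eq_zero F]
    intro t ht
    obtain ⟨x, m, rfl⟩ := hS t
    obtain ⟨e, he⟩ := hA x
    rw [hF] at ht
    calc p x m = p (e * x) m := by rw [he]
      _ = p e (σ x m) := p_bal e x m
      _ = p e 0 := by rw [ht]
      _ = 0 := p_zero e
  · intro m
    obtain ⟨e, he⟩ := hM m
    exact ⟨p e m, by rw [hF, he]⟩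
end

section
/- Let R be a commutative ring, 𝔸 a left s-unital nonunital R-algebra, and M a left module over 𝔸. Regard 𝔸 as a right module over itself via multiplication, and let (T, p) be any abelian group with an 𝔸-balanced bi-additive map p : 𝔸 → M → T satisfying the universal property of the nonunital tensor product 𝔸 ⊗_𝔸 M. Let F : T →+ M be the unique additive homomorphism with F(p x m) = x • m. Then F is bijective if and only if M is s-unital. In other words, over a left s-unital algebra, a left module is firm if and only if it is s-unital. -/
/-!
Write `L a : T →+ T` for left multiplication `x ⊗ m ↦ (a * x) ⊗ m`; it satisfies
`F (L a t) = a • F t` and `L a t = a ⊗ F t`. The heart of the matter is that every `t : T`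
has a local unit `e` with `L e t = t`. Indeed `t` is a finite sum of simple tensors
`± xᵢ ⊗ mᵢ`, so any common left unit of the finitely many `xᵢ` fixes it, and such a common
unit exists by Tominaga's trick: if `e₁` fixes `s` and `e₂` fixes `y - e₁ * y`, then
`e₁ + e₂ - e₂ * e₁` fixes `s ∪ {y}`.

Given this, `F t = 0` forces `t = L e t = e ⊗ F t = 0`, and `m = F t` forces
`m = F (L e t) = e • m`; conversely an s-unital `m = e • m` is `F (e ⊗ m)`.
-/

universe u

section LeftUnits

variable {𝔸 : Type*} [NonUnitalRing 𝔸]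

theorem add_sub_mul_mul_eq_self {e₁ e₂ y : 𝔸} (h : e₂ * (y - e₁ * y) = y - e₁ * y) :
    (e₁ + e₂ - e₂ * e₁) * y = y := by
  rw [sub_mul, add_mul, mul_assoc, add_sub_assoc, ← mul_sub, h]
  abel

theorem exists_forall_mem_mul_eq_self (hA : ∀ x : 𝔸, ∃ e : 𝔸, e * x = x) (s : Finset 𝔸) :
    ∃ e : 𝔸, ∀ x ∈ s, e * x = x := by
  classical
  induction s using Finset.induction_on with
  | empty => exact ⟨0, by simp⟩
  | insert y s _ ih =>
    obtain ⟨e₁, he₁⟩ := ih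
    obtain ⟨e₂, he₂⟩ := hA (y - e₁ * y)
    refine ⟨e₁ + e₂ - e₂ * e₁, (Finset.forall_mem_insert _ _ _).2
      ⟨add_sub_mul_mul_eq_self he₂, fun x hx => add_sub_mul_mul_eq_self ?_⟩⟩
    rw [he₁ x hx, sub_self, mul_zero]

variable {T : Type*} [AddCommGroup T]

/-- Quantifying over a finite set of units, not a single unit of `t`, is what makes this
closed under addition. -/
def localUnitFixedSubgroup (L : 𝔸 → T →+ T) : AddSubgroup T where
  carrier := {t | ∃ s : Finset 𝔸, ∀ e, (∀ x ∈ s, e * x = x) → L e t = t}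
  zero_mem' := ⟨∅, fun e _ => map_zero (L e)⟩
  add_mem' := by
    classical
    rintro t₁ t₂ ⟨s₁, h₁⟩ ⟨s₂, h₂⟩
    refine ⟨s₁ ∪ s₂, fun e he => ?_⟩
    rw [map_add, h₁ e fun x hx => he x (Finset.mem_union_left _ hx),
      h₂ e fun x hx => he x (Finset.mem_union_right _ hx)]
  neg_mem' := by
    rintro t ⟨s, h⟩
    exact ⟨s, fun e he => by rw [map_neg, h e he]⟩

theorem exists_eq_self_of_mem_localUnitFixedSubgroup (hA : ∀ x : 𝔸, ∃ e : 𝔸, e * x = x)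
    {L : 𝔸 → T →+ T} {t : T} (ht : t ∈ localUnitFixedSubgroup L) : ∃ e, L e t = t := by
  obtain ⟨s, hs⟩ := ht
  obtain ⟨e, he⟩ := exists_forall_mem_mul_eq_self hA s
  exact ⟨e, hs e he⟩

end LeftUnits

section BalancedMaps

variable (R : Type*) {𝔸 M : Type*} [CommRing R] [NonUnitalRing 𝔸] [Module R 𝔸]
  [AddCommGroup M] [Module R M] (σ : 𝔸 → M → M)

def IsBalanced {G : Type*} [AddCommGroup G] (f : 𝔸 → M → G) : Prop :=
  (∀ (x x' : 𝔸) (m : M), f (x + x') m = f x m + f x' m) ∧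
  (∀ (x : 𝔸) (m m' : M), f x (m + m') = f x m + f x m') ∧
  (∀ (x a : 𝔸) (m : M), f (x * a) m = f x (σ a m)) ∧
  (∀ (r : R) (x : 𝔸) (m : M), f (r • x) m = f x (r • m))

def IsUniversalBalanced {T : Type u} [AddCommGroup T] (p : 𝔸 → M → T) : Prop :=
  ∀ (G : Type u) (_ : AddCommGroup G) (f : 𝔸 → M → G),
    IsBalanced R σ f → ∃! F : T →+ G, ∀ (x : 𝔸) (m : M), F (p x m) = f x m

variable {R σ} {G H : Type*} [AddCommGroup G] [AddCommGroup H]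

theorem IsBalanced.comp {f : 𝔸 → M → G} (hf : IsBalanced R σ f) (g : G →+ H) :
    IsBalanced R σ fun x m => g (f x m) := by
  obtain ⟨hadd, hmadd, hbal, hrbal⟩ := hf
  exact ⟨fun x x' m => by simp only [hadd, map_add], fun x m m' => by simp only [hmadd, map_add],
    fun x a m => by simp only [hbal], fun r x m => by simp only [hrbal]⟩

theorem IsBalanced.mul_left [SMulCommClass R 𝔸 𝔸] {f : 𝔸 → M → G} (hf : IsBalanced R σ f)
    (a : 𝔸) : IsBalanced R σ fun x m => f (a * x) m := by
  obtain ⟨hadd, hmadd, hbal, hrbal⟩ := hf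
  exact ⟨fun x x' m => by simp only [mul_add, hadd], fun x m m' => hmadd _ m m',
    fun x b m => by simp only [← mul_assoc, hbal],
    fun r x m => by simp only [mul_smul_comm, hrbal]⟩

theorem IsBalanced.map_zero_right {f : 𝔸 → M → G} (hf : IsBalanced R σ f) (x : 𝔸) :
    f x 0 = 0 :=
  (AddMonoidHom.mk' (f x) (hf.2.1 x)).map_zero

end BalancedMaps

namespace IsUniversalBalanced

variable {R : Type*} {𝔸 M T : Type u} [CommRing R] [NonUnitalRing 𝔸] [Module R 𝔸]
  [AddCommGroup M] [Module R M] [AddCommGroup T] {σ : 𝔸 → M → M} {p : 𝔸 → M → T}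
  {G : Type u} [AddCommGroup G]

noncomputable def lift (hp : IsUniversalBalanced R σ p) {f : 𝔸 → M → G}
    (hf : IsBalanced R σ f) : T →+ G :=
  (hp G _ f hf).exists.choose

@[simp]
theorem lift_apply (hp : IsUniversalBalanced R σ p) {f : 𝔸 → M → G}
    (hf : IsBalanced R σ f) (x : 𝔸) (m : M) : hp.lift hf (p x m) = f x m :=
  (hp G _ f hf).exists.choose_spec x m

theorem hom_ext (hp : IsUniversalBalanced R σ p) (hpb : IsBalanced R σ p)
    {g₁ g₂ : T →+ G} (h : ∀ x m, g₁ (p x m) = g₂ (p x m)) : g₁ = g₂ :=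
  (hp G _ _ (hpb.comp g₁)).unique (fun _ _ => rfl) fun x m => (h x m).symm

theorem closure_range_eq_top (hp : IsUniversalBalanced R σ p) :
    AddSubgroup.closure (Set.range (Function.uncurry p)) = ⊤ := by
  set S := AddSubgroup.closure (Set.range (Function.uncurry p))
  have hzero : IsBalanced R σ fun (_ : 𝔸) (_ : M) => (0 : T ⧸ S) :=
    ⟨fun _ _ _ => (add_zero 0).symm, fun _ _ _ => (add_zero 0).symm, fun _ _ _ => rfl,
      fun _ _ _ => rfl⟩
  have hmk : QuotientAddGroup.mk' S = 0 :=
    (hp _ _ _ hzero).unique (fun x m => (QuotientAddGroup.eq_zero_iff _).2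
      (AddSubgroup.subset_closure ⟨(x, m), rfl⟩)) fun _ _ => rfl
  refine eq_top_iff.2 fun t _ => ?_
  rw [← QuotientAddGroup.eq_zero_iff, ← QuotientAddGroup.mk'_apply, hmk, AddMonoidHom.zero_apply]

variable [SMulCommClass R 𝔸 𝔸]

noncomputable def lmul (hp : IsUniversalBalanced R σ p) (hpb : IsBalanced R σ p) (a : 𝔸) :
    T →+ T :=
  hp.lift (hpb.mul_left a)

@[simp]
theorem lmul_apply (hp : IsUniversalBalanced R σ p) (hpb : IsBalanced R σ p) (a x : 𝔸)
    (m : M) : hp.lmul hpb a (p x m) = p (a * x) m :=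
  hp.lift_apply _ x m

theorem map_lmul (hp : IsUniversalBalanced R σ p) (hpb : IsBalanced R σ p)
    (σ_madd : ∀ (a : 𝔸) (m m' : M), σ a (m + m') = σ a m + σ a m')
    (σ_mul : ∀ (a b : 𝔸) (m : M), σ (a * b) m = σ a (σ b m))
    {F : T →+ M} (hF : ∀ x m, F (p x m) = σ x m) (a : 𝔸) (t : T) :
    F (hp.lmul hpb a t) = σ a (F t) := by
  have h : F.comp (hp.lmul hpb a) = (AddMonoidHom.mk' (σ a) (σ_madd a)).comp F :=
    hp.hom_ext hpb fun x m => by simp [hF, σ_mul]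
  exact DFunLike.congr_fun h t

theorem apply_map_eq_lmul (hp : IsUniversalBalanced R σ p) (hpb : IsBalanced R σ p)
    {F : T →+ M} (hF : ∀ x m, F (p x m) = σ x m) (a : 𝔸) (t : T) :
    p a (F t) = hp.lmul hpb a t := by
  have h : (AddMonoidHom.mk' (p a) (hpb.2.1 a)).comp F = hp.lmul hpb a :=
    hp.hom_ext hpb fun x m => by simp [hF, hpb.2.2.1]
  exact DFunLike.congr_fun h t

theorem localUnitFixedSubgroup_lmul (hp : IsUniversalBalanced R σ p)
    (hpb : IsBalanced R σ p) : localUnitFixedSubgroup (hp.lmul hpb) = ⊤ := by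
  rw [eq_top_iff, ← hp.closure_range_eq_top, AddSubgroup.closure_le]
  rintro _ ⟨⟨x, m⟩, rfl⟩
  exact ⟨{x}, fun e he => by simp [he x (Finset.mem_singleton_self x)]⟩

theorem exists_lmul_eq_self (hp : IsUniversalBalanced R σ p) (hpb : IsBalanced R σ p)
    (hA : ∀ x : 𝔸, ∃ e : 𝔸, e * x = x) (t : T) : ∃ e, hp.lmul hpb e t = t :=
  exists_eq_self_of_mem_localUnitFixedSubgroup hA
    (hp.localUnitFixedSubgroup_lmul hpb ▸ AddSubgroup.mem_top t)

end IsUniversalBalanced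

theorem firm_iff_sUnital_over_sUnital_algebra_general
    (R : Type*) (𝔸 M : Type u) [CommRing R] [NonUnitalRing 𝔸] [Module R 𝔸]
    [SMulCommClass R 𝔸 𝔸]
    [AddCommGroup M] [Module R M]
    (σ : 𝔸 → M → M)
    -- left `𝔸`-module axioms for `M`
    (σ_madd : ∀ (a : 𝔸) (m m' : M), σ a (m + m') = σ a m + σ a m')
    (σ_mul : ∀ (a b : 𝔸) (m : M), σ (a * b) m = σ a (σ b m))
    (hA : ∀ x : 𝔸, ∃ e : 𝔸, e * x = x)
    -- `(T, p)` realizes the nonunital tensor product `𝔸 ⊗_𝔸 M`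
    (T : Type u) [AddCommGroup T] (p : 𝔸 → M → T)
    (p_add : ∀ (x x' : 𝔸) (m : M), p (x + x') m = p x m + p x' m)
    (p_madd : ∀ (x : 𝔸) (m m' : M), p x (m + m') = p x m + p x m')
    (p_bal : ∀ (x a : 𝔸) (m : M), p (x * a) m = p x (σ a m))
    (p_rbal : ∀ (r : R) (x : 𝔸) (m : M), p (r • x) m = p x (r • m))
    (p_univ : ∀ (G : Type u) (_ : AddCommGroup G) (f : 𝔸 → M → G),
      ((∀ (x x' : 𝔸) (m : M), f (x + x') m = f x m + f x' m) ∧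
       (∀ (x : 𝔸) (m m' : M), f x (m + m') = f x m + f x m') ∧
       (∀ (x a : 𝔸) (m : M), f (x * a) m = f x (σ a m)) ∧
       (∀ (r : R) (x : 𝔸) (m : M), f (r • x) m = f x (r • m))) →
      ∃! F : T →+ G, ∀ (x : 𝔸) (m : M), F (p x m) = f x m)
    -- the canonical map `F : 𝔸 ⊗_𝔸 M → M`
    (F : T →+ M) (hF : ∀ (x : 𝔸) (m : M), F (p x m) = σ x m) :
    Function.Bijective F ↔ (∀ m : M, ∃ e : 𝔸, σ e m = m) := by
  have hp : IsUniversalBalanced R σ p := p_univ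
  have hpb : IsBalanced R σ p := ⟨p_add, p_madd, p_bal, p_rbal⟩
  have local_unit := hp.exists_lmul_eq_self hpb hA
  constructor
  · rintro ⟨-, hsurj⟩ m
    obtain ⟨t, rfl⟩ := hsurj m
    obtain ⟨e, he⟩ := local_unit t
    exact ⟨e, by rw [← hp.map_lmul hpb σ_madd σ_mul hF, he]⟩
  · intro hM
    refine ⟨(injective_iff_map_eq_zero F).2 fun t ht => ?_, fun m => ?_⟩
    · obtain ⟨e, he⟩ := local_unit t
      rw [← he, ← hp.apply_map_eq_lmul hpb hF, ht, hpb.map_zero_right]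
    · obtain ⟨e, he⟩ := hM m
      exact ⟨p e m, by rw [hF, he]⟩

/-- over a left s-unital nonunital `R`-algebra `𝔸`, a left
`𝔸`-module `M` is firm if and only if it is s-unital.  Here `(T, p)` is any
realization of the nonunital tensor product `𝔸 ⊗_𝔸 M` given by its universal
property, and `F : T →+ M` is the unique additive map with `F (p x m) = σ x m`;
the claim is that `F` is bijective iff `M` is s-unital. -/
theorem firm_iff_sUnital_over_sUnital_algebra
    (R : Type*) (𝔸 M : Type u) [CommRing R] [NonUnitalRing 𝔸] [Module R 𝔸]
    [IsScalarTower R 𝔸 𝔸] [SMulCommClass R 𝔸 𝔸]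
    [AddCommGroup M] [Module R M]
    (σ : 𝔸 → M → M)
    -- left `𝔸`-module axioms for `M`
    (σ_add : ∀ (a b : 𝔸) (m : M), σ (a + b) m = σ a m + σ b m)
    (σ_madd : ∀ (a : 𝔸) (m m' : M), σ a (m + m') = σ a m + σ a m')
    (σ_mul : ∀ (a b : 𝔸) (m : M), σ (a * b) m = σ a (σ b m))
    (σ_smul : ∀ (r : R) (a : 𝔸) (m : M), σ (r • a) m = r • σ a m)
    (σ_smul' : ∀ (r : R) (a : 𝔸) (m : M), σ a (r • m) = r • σ a m)
    (hA : ∀ x : 𝔸, ∃ e : 𝔸, e * x = x)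
    -- `(T, p)` realizes the nonunital tensor product `𝔸 ⊗_𝔸 M`
    (T : Type u) [AddCommGroup T] (p : 𝔸 → M → T)
    (p_add : ∀ (x x' : 𝔸) (m : M), p (x + x') m = p x m + p x' m)
    (p_madd : ∀ (x : 𝔸) (m m' : M), p x (m + m') = p x m + p x m')
    (p_bal : ∀ (x a : 𝔸) (m : M), p (x * a) m = p x (σ a m))
    (p_rbal : ∀ (r : R) (x : 𝔸) (m : M), p (r • x) m = p x (r • m))
    (p_univ : ∀ (G : Type u) (_ : AddCommGroup G) (f : 𝔸 → M → G),
      ((∀ (x x' : 𝔸) (m : M), f (x + x') m = f x m + f x' m) ∧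
       (∀ (x : 𝔸) (m m' : M), f x (m + m') = f x m + f x m') ∧
       (∀ (x a : 𝔸) (m : M), f (x * a) m = f x (σ a m)) ∧
       (∀ (r : R) (x : 𝔸) (m : M), f (r • x) m = f x (r • m))) →
      ∃! F : T →+ G, ∀ (x : 𝔸) (m : M), F (p x m) = f x m)
    -- the canonical map `F : 𝔸 ⊗_𝔸 M → M`
    (F : T →+ M) (hF : ∀ (x : 𝔸) (m : M), F (p x m) = σ x m) :
    Function.Bijective F ↔ (∀ m : M, ∃ e : 𝔸, σ e m = m) :=
  firm_iff_sUnital_over_sUnital_algebra_general R 𝔸 M σ σ_madd σ_mul hA T p p_add p_madd p_bal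
    p_rbal p_univ F hF
end
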